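/- arXiv:1704.02844 — 3 statements merged into one kernel-verified Lean document; each statement's English description precedes it below -/
import Mathlib

section
/- Let G = (V, E) be a finite simple graph with n vertices, let β > 1 be a real number, and let L be a natural number with β^L ≥ n. Then there exists a level function ℓ : V → {0, 1, …, L} such that, with the level-induced edge weights w(x,y) = β^{−max(ℓ(x), ℓ(y))}, the node weights satisfy: W_y < 1 for every node y, and W_y ≥ 1/β for every node y with ℓ(y) > 0. -/
open Finset

variable {V : Type*}

/-- The weight of a node `v`: the sum of the weights of the edges incident on `v`. -/
noncomputable def nodeWeight [Fintype V] [DecidableEq V] (G : SimpleGraph V)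
    [DecidableRel G.Adj] (w : Sym2 V → ℝ) (v : V) : ℝ :=
  ∑ e ∈ G.edgeFinset, if v ∈ e then w e else 0

/-- The level-induced edge weights `w(x,y) = β ^ (-max(ℓ x, ℓ y))`. -/
noncomputable def levelWeight (β : ℝ) (ℓ : V → ℕ) : Sym2 V → ℝ :=
  Sym2.lift ⟨fun x y => β ^ (-(max (ℓ x) (ℓ y) : ℤ)), fun x y => by simp [max_comm]⟩

/-- A vertex cover: every edge has at least one endpoint in the set. -/
def IsVertexCover (G : SimpleGraph V) (C : Set V) : Prop :=
  ∀ ⦃u v : V⦄, G.Adj u v → u ∈ C ∨ v ∈ C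

/-! Top-down greedy: start with every vertex at level `L`, where the weight of a vertex is at
most `deg v / β ^ L < n / β ^ L ≤ 1`. Then, for `m = L - 1, …, 0`, lower to `m` every vertex at
level `m + 1` whose weight is below `1 / β`. Lowering all levels by at most one multiplies each
weight by at most `β`, so a lowered vertex keeps weight `< 1`; for a vertex kept at a level
`≥ m + 1`, neighbours only move from `m + 1` to `m`, which leaves the maxima on its edges, and
hence its weight, unchanged. -/

namespace SimpleGraph

variable (G : SimpleGraph V) [DecidableEq V] (v : V) [Fintype (G.neighborSet v)]

theorem incidenceFinset_eq_image_neighborFinset :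
    G.incidenceFinset v = (G.neighborFinset v).image (s(v, ·)) := by
  ext e
  induction e using Sym2.ind with
  | _ x y =>
    simp only [mem_incidenceFinset, incidenceSet, Set.mem_ofPred_eq, mem_edgeSet, Sym2.mem_iff,
      mem_image, mem_neighborFinset, Sym2.eq_iff]
    constructor
    · rintro ⟨h, rfl | rfl⟩
      · exact ⟨y, h, .inl ⟨rfl, rfl⟩⟩
      · exact ⟨x, h.symm, .inr ⟨rfl, rfl⟩⟩
    · rintro ⟨a, h, ⟨rfl, rfl⟩ | ⟨rfl, rfl⟩⟩
      · exact ⟨h, .inl rfl⟩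
      · exact ⟨h.symm, .inr rfl⟩

theorem sum_incidenceFinset_eq_sum_neighborFinset {M : Type*} [AddCommMonoid M]
    (f : Sym2 V → M) :
    ∑ e ∈ G.incidenceFinset v, f e = ∑ x ∈ G.neighborFinset v, f s(v, x) := by
  rw [incidenceFinset_eq_image_neighborFinset, sum_image]
  intro x _ y _ h
  exact Sym2.congr_right.mp h

end SimpleGraph

section LevelWeights

variable [Fintype V] [DecidableEq V] (G : SimpleGraph V) [DecidableRel G.Adj]

theorem nodeWeight_eq_sum_neighborFinset (w : Sym2 V → ℝ) (v : V) :
    nodeWeight G w v = ∑ x ∈ G.neighborFinset v, w s(v, x) := by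
  rw [nodeWeight, ← sum_filter, ← SimpleGraph.incidenceFinset_eq_filter,
    G.sum_incidenceFinset_eq_sum_neighborFinset]

theorem nodeWeight_levelWeight (β : ℝ) (ℓ : V → ℕ) (v : V) :
    nodeWeight G (levelWeight β ℓ) v =
      ∑ x ∈ G.neighborFinset v, β ^ (-(max (ℓ v) (ℓ x) : ℤ)) :=
  nodeWeight_eq_sum_neighborFinset G _ v

theorem nodeWeight_levelWeight_const_lt_one {β : ℝ} (hβ : 0 < β) {L : ℕ}
    (hL : (Fintype.card V : ℝ) ≤ β ^ L) (v : V) :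
    nodeWeight G (levelWeight β fun _ => L) v < 1 := by
  calc nodeWeight G (levelWeight β fun _ => L) v
      = G.degree v * β ^ (-(L : ℤ)) := by
        simp [nodeWeight_levelWeight, ← SimpleGraph.card_neighborFinset_eq_degree]
    _ < Fintype.card V * β ^ (-(L : ℤ)) := by
        gcongr
        exact_mod_cast G.degree_lt_card_verts v
    _ ≤ β ^ L * β ^ (-(L : ℤ)) := by gcongr
    _ = 1 := by rw [zpow_neg, zpow_natCast, mul_inv_cancel₀ (pow_pos hβ L).ne']

theorem nodeWeight_levelWeight_congr (β : ℝ) {ℓ₁ ℓ₂ : V → ℕ} (v : V)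
    (h : ∀ x, G.Adj v x → max (ℓ₁ v) (ℓ₁ x) = max (ℓ₂ v) (ℓ₂ x)) :
    nodeWeight G (levelWeight β ℓ₁) v = nodeWeight G (levelWeight β ℓ₂) v := by
  simp only [nodeWeight_levelWeight]
  refine sum_congr rfl fun x hx => ?_
  have := h x ((G.mem_neighborFinset v x).mp hx)
  congr 2
  omega

theorem nodeWeight_levelWeight_le_mul {β : ℝ} (hβ : 1 ≤ β) {ℓ₁ ℓ₂ : V → ℕ}
    (h : ∀ x, ℓ₁ x ≤ ℓ₂ x + 1) (v : V) :
    nodeWeight G (levelWeight β ℓ₂) v ≤ β * nodeWeight G (levelWeight β ℓ₁) v := by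
  simp only [nodeWeight_levelWeight, mul_sum]
  refine sum_le_sum fun x _ => ?_
  calc β ^ (-(max (ℓ₂ v) (ℓ₂ x) : ℤ))
      ≤ β ^ (1 - (max (ℓ₁ v) (ℓ₁ x) : ℤ)) := by
        have := h v
        have := h x
        exact zpow_le_zpow_right₀ hβ (by omega)
    _ = β * β ^ (-(max (ℓ₁ v) (ℓ₁ x) : ℤ)) := by
        rw [sub_eq_add_neg, zpow_add₀ (by positivity), zpow_one]

end LevelWeights

section Leveling

variable [Fintype V] [DecidableEq V] (G : SimpleGraph V) [DecidableRel G.Adj] (β : ℝ) (L : ℕ)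

/-- The state of the top-down greedy construction once all levels above `m` are settled:
vertices at level `m` may still be lowered, the others are final. -/
structure IsPartialLeveling (m : ℕ) (ℓ : V → ℕ) : Prop where
  le_level : ∀ v, m ≤ ℓ v
  level_le : ∀ v, ℓ v ≤ L
  nodeWeight_lt_one : ∀ y, nodeWeight G (levelWeight β ℓ) y < 1
  inv_le_nodeWeight : ∀ y, m < ℓ y → 1 / β ≤ nodeWeight G (levelWeight β ℓ) y

theorem isPartialLeveling_const (hβ : 0 < β) (hL : (Fintype.card V : ℝ) ≤ β ^ L) :
    IsPartialLeveling G β L L fun _ => L where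
  le_level _ := le_rfl
  level_le _ := le_rfl
  nodeWeight_lt_one := nodeWeight_levelWeight_const_lt_one G hβ hL
  inv_le_nodeWeight _ h := absurd h (lt_irrefl L)

noncomputable def lowerLight (m : ℕ) (ℓ : V → ℕ) (v : V) : ℕ :=
  if ℓ v = m + 1 ∧ nodeWeight G (levelWeight β ℓ) v < 1 / β then m else ℓ v

theorem lowerLight_eq_or (m : ℕ) (ℓ : V → ℕ) (v : V) :
    lowerLight G β m ℓ v = ℓ v ∨ ℓ v = m + 1 ∧ lowerLight G β m ℓ v = m := by
  unfold lowerLight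
  split_ifs with h
  exacts [.inr ⟨h.1, rfl⟩, .inl rfl]

variable {G β L}

theorem isPartialLeveling_lowerLight (hβ : 1 ≤ β) {m : ℕ} {ℓ : V → ℕ}
    (h : IsPartialLeveling G β L (m + 1) ℓ) :
    IsPartialLeveling G β L m (lowerLight G β m ℓ) := by
  have hβ0 : 0 < β := zero_lt_one.trans_le hβ
  have lower_le : ∀ v, ℓ v ≤ lowerLight G β m ℓ v + 1 := fun v => by
    rcases lowerLight_eq_or G β m ℓ v with h' | h' <;> omega
  have weight_eq_of_kept : ∀ y, ¬(ℓ y = m + 1 ∧ nodeWeight G (levelWeight β ℓ) y < 1 / β) →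
      nodeWeight G (levelWeight β (lowerLight G β m ℓ)) y = nodeWeight G (levelWeight β ℓ) y := by
    intro y hy
    refine nodeWeight_levelWeight_congr G β y fun x _ => ?_
    have hy' : lowerLight G β m ℓ y = ℓ y := if_neg hy
    have := h.le_level y
    rcases lowerLight_eq_or G β m ℓ x with hx | hx <;> omega
  refine ⟨fun v => ?_, fun v => ?_, fun y => ?_, fun y hy => ?_⟩
  · have := h.le_level v
    rcases lowerLight_eq_or G β m ℓ v with h' | h' <;> omega
  · have := h.level_le v
    rcases lowerLight_eq_or G β m ℓ v with h' | h' <;> omega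
  · by_cases hy : ℓ y = m + 1 ∧ nodeWeight G (levelWeight β ℓ) y < 1 / β
    · calc nodeWeight G (levelWeight β (lowerLight G β m ℓ)) y
          ≤ β * nodeWeight G (levelWeight β ℓ) y := nodeWeight_levelWeight_le_mul G hβ lower_le y
        _ < β * (1 / β) := by gcongr; exact hy.2
        _ = 1 := by field_simp
    · rw [weight_eq_of_kept y hy]
      exact h.nodeWeight_lt_one y
  · have hkept : ¬(ℓ y = m + 1 ∧ nodeWeight G (levelWeight β ℓ) y < 1 / β) := fun hc => by
      rw [lowerLight, if_pos hc] at hy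
      exact lt_irrefl m hy
    rw [weight_eq_of_kept y hkept]
    rcases (h.le_level y).lt_or_eq with hlt | heq
    · exact h.inv_le_nodeWeight y hlt
    · exact not_lt.mp fun hlt => hkept ⟨heq.symm, hlt⟩

end Leveling

theorem stmt0 [Fintype V] [DecidableEq V] (G : SimpleGraph V) [DecidableRel G.Adj]
    (β : ℝ) (hβ : 1 < β) (L : ℕ) (hL : (Fintype.card V : ℝ) ≤ β ^ L) :
    ∃ ℓ : V → ℕ, (∀ v : V, ℓ v ≤ L) ∧
      (∀ y : V, nodeWeight G (levelWeight β ℓ) y < 1) ∧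
      (∀ y : V, 0 < ℓ y → 1 / β ≤ nodeWeight G (levelWeight β ℓ) y) := by
  obtain ⟨ℓ, hℓ⟩ : ∃ ℓ, IsPartialLeveling G β L 0 ℓ :=
    Nat.decreasingInduction (motive := fun m _ => ∃ ℓ, IsPartialLeveling G β L m ℓ)
      (fun _ _ ⟨ℓ, h⟩ => ⟨_, isPartialLeveling_lowerLight hβ.le h⟩)
      ⟨_, isPartialLeveling_const G β L (zero_lt_one.trans hβ) hL⟩ L.zero_le
  exact ⟨ℓ, hℓ.level_le, hℓ.nodeWeight_lt_one, hℓ.inv_le_nodeWeight⟩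
end

section
/- Let G = (V, E) be a finite simple graph, let α, β ≥ 1 be reals, let ℓ : V → ℕ be a level function, and let w be the level-induced edge weights w(x,y) = β^{−max(ℓ(x), ℓ(y))}. Suppose Property 1 holds: W_y < 1 for every node y, and W_y ≥ 1/(αβ) for every node y with ℓ(y) > 0. Then w is a fractional matching of G, and for every fractional matching w′ of G one has Σ_{e ∈ E} w′(e) ≤ 2αβ · Σ_{e ∈ E} w(e); that is, w is a 2αβ-approximate maximum fractional matching. -/
open Finset

variable {V : Type*}

/-- A fractional matching: nonnegative edge weights with all node weights at most 1. -/
def IsFractionalMatching [Fintype V] [DecidableEq V] (G : SimpleGraph V)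
    [DecidableRel G.Adj] (w : Sym2 V → ℝ) : Prop :=
  (∀ e ∈ G.edgeFinset, 0 ≤ w e) ∧ ∀ v, nodeWeight G w v ≤ 1

/-!
Weak LP duality: if `y ≥ 0` is a vertex function with `y x + y z ≥ c` on every edge, then
`c` times the size of any fractional matching is at most `∑ y`. Property 1 says that the node
weights `W` of the level-induced weights satisfy this with `c = 1 / (αβ)` (an edge with both
endpoints at level 0 has weight 1, which `W < 1` forbids), and `∑ W = 2 ∑ w` by double counting.
-/

lemma levelWeight_mk (β : ℝ) (ℓ : V → ℕ) (x y : V) :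
    levelWeight β ℓ s(x, y) = β ^ (-(max (ℓ x) (ℓ y) : ℤ)) :=
  rfl

lemma levelWeight_pos {β : ℝ} (hβ : 0 < β) (ℓ : V → ℕ) (e : Sym2 V) : 0 < levelWeight β ℓ e := by
  induction e using Sym2.ind with
  | _ x y => exact zpow_pos hβ _

section NodeWeight

variable [Fintype V] [DecidableEq V] {G : SimpleGraph V} [DecidableRel G.Adj]

lemma sum_ite_mem_of_ne {x y : V} (h : x ≠ y) (f : V → ℝ) :
    ∑ v, (if v ∈ s(x, y) then f v else 0) = f x + f y := by
  rw [← sum_filter, show univ.filter (· ∈ s(x, y)) = {x, y} by ext; simp, sum_pair h]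

lemma nodeWeight_nonneg {w : Sym2 V → ℝ} (hw : ∀ e ∈ G.edgeFinset, 0 ≤ w e) (v : V) :
    0 ≤ nodeWeight G w v :=
  sum_nonneg fun e he => by split_ifs <;> simp [hw e he]

lemma le_nodeWeight_of_adj {w : Sym2 V → ℝ} (hw : ∀ e ∈ G.edgeFinset, 0 ≤ w e) {x y : V}
    (hxy : G.Adj x y) : w s(x, y) ≤ nodeWeight G w x := by
  have hle := single_le_sum (f := fun e => if x ∈ e then w e else 0)
    (fun e he => by split_ifs <;> simp [hw e he]) (G.mem_edgeFinset.mpr (G.mem_edgeSet.mpr hxy))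
  simpa [nodeWeight] using hle

lemma sum_mul_sum_mem_eq_sum_mul_nodeWeight (w : Sym2 V → ℝ) (f : V → ℝ) :
    ∑ e ∈ G.edgeFinset, w e * ∑ v, (if v ∈ e then f v else 0) =
      ∑ v, f v * nodeWeight G w v := by
  simp_rw [nodeWeight, mul_sum]
  rw [sum_comm]
  refine sum_congr rfl fun v _ => sum_congr rfl fun e _ => ?_
  split_ifs <;> ring

lemma sum_nodeWeight (w : Sym2 V → ℝ) :
    ∑ v, nodeWeight G w v = 2 * ∑ e ∈ G.edgeFinset, w e := by
  have h := sum_mul_sum_mem_eq_sum_mul_nodeWeight (G := G) w 1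
  simp only [Pi.one_apply, one_mul] at h
  rw [← h, mul_sum]
  refine sum_congr rfl fun e he => ?_
  induction e using Sym2.ind with
  | _ x y => rw [sum_ite_mem_of_ne (G.mem_edgeFinset.mp he).ne]; ring

lemma IsFractionalMatching.mul_sum_le_sum_of_cover {w : Sym2 V → ℝ}
    (hw : IsFractionalMatching G w) {c : ℝ} {y : V → ℝ} (hy : ∀ v, 0 ≤ y v)
    (hcover : ∀ x z, G.Adj x z → c ≤ y x + y z) :
    c * ∑ e ∈ G.edgeFinset, w e ≤ ∑ v, y v :=
  calc c * ∑ e ∈ G.edgeFinset, w e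
      ≤ ∑ e ∈ G.edgeFinset, w e * ∑ v, (if v ∈ e then y v else 0) := by
        rw [mul_sum]
        refine sum_le_sum fun e he => ?_
        induction e using Sym2.ind with
        | _ x z =>
          have hxz := G.mem_edgeFinset.mp he
          rw [sum_ite_mem_of_ne hxz.ne, mul_comm]
          exact mul_le_mul_of_nonneg_left (hcover x z hxz) (hw.1 _ he)
    _ = ∑ v, y v * nodeWeight G w v := sum_mul_sum_mem_eq_sum_mul_nodeWeight w y
    _ ≤ ∑ v, y v := sum_le_sum fun v _ => mul_le_of_le_one_right (hy v) (hw.2 v)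

end NodeWeight

lemma one_div_le_nodeWeight_add_of_adj [Fintype V] [DecidableEq V] {G : SimpleGraph V} [DecidableRel G.Adj]
    {α β : ℝ} (hβ : 0 < β) {ℓ : V → ℕ}
    (hlt : ∀ y : V, nodeWeight G (levelWeight β ℓ) y < 1)
    (hge : ∀ y : V, 0 < ℓ y → 1 / (α * β) ≤ nodeWeight G (levelWeight β ℓ) y)
    {x y : V} (hxy : G.Adj x y) :
    1 / (α * β) ≤ nodeWeight G (levelWeight β ℓ) x + nodeWeight G (levelWeight β ℓ) y := by
  have hw : ∀ e ∈ G.edgeFinset, 0 ≤ levelWeight β ℓ e := fun e _ => (levelWeight_pos hβ ℓ e).le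
  have hWx := nodeWeight_nonneg hw x
  have hWy := nodeWeight_nonneg hw y
  rcases Nat.eq_zero_or_pos (ℓ x) with hx | hx
  · rcases Nat.eq_zero_or_pos (ℓ y) with hy | hy
    · have hxy_one : levelWeight β ℓ s(x, y) = 1 := by simp [levelWeight_mk, hx, hy]
      have := le_nodeWeight_of_adj hw hxy
      linarith [hlt x]
    · linarith [hge y hy]
  · linarith [hge x hx]

theorem stmt1 [Fintype V] [DecidableEq V] (G : SimpleGraph V) [DecidableRel G.Adj]
    (α β : ℝ) (hα : 1 ≤ α) (hβ : 1 ≤ β) (ℓ : V → ℕ)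
    (hlt : ∀ y : V, nodeWeight G (levelWeight β ℓ) y < 1)
    (hge : ∀ y : V, 0 < ℓ y → 1 / (α * β) ≤ nodeWeight G (levelWeight β ℓ) y) :
    IsFractionalMatching G (levelWeight β ℓ) ∧
      ∀ w' : Sym2 V → ℝ, IsFractionalMatching G w' →
        ∑ e ∈ G.edgeFinset, w' e ≤ 2 * α * β * ∑ e ∈ G.edgeFinset, levelWeight β ℓ e := by
  have hβ0 : 0 < β := zero_lt_one.trans_le hβ
  have hαβ : 0 < α * β := mul_pos (zero_lt_one.trans_le hα) hβ0
  have hw : IsFractionalMatching G (levelWeight β ℓ) :=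
    ⟨fun e _ => (levelWeight_pos hβ0 ℓ e).le, fun v => (hlt v).le⟩
  refine ⟨hw, fun w' hw' => ?_⟩
  have hdual := hw'.mul_sum_le_sum_of_cover (nodeWeight_nonneg hw.1)
    (fun x y hxy => one_div_le_nodeWeight_add_of_adj hβ0 hlt hge hxy)
  rw [sum_nodeWeight, one_div_mul_eq_div, div_le_iff₀ hαβ] at hdual
  linarith
end

section
/- Let G = (V, E) be a finite simple graph, let E^r ⊆ E be any subset of its edges, let β be a positive integer, and let W : V → ℝ satisfy 0 ≤ W_v < 1 for every node v. Then there exists a residual edge-weight function w^r : E → ℝ≥0 such that: w^r(e) = 0 for every e ∉ E^r; every value w^r(e) is an integer multiple of 1/β; (a) W_v + W^r_v ≤ 1 for every node v, where W^r_v := Σ_{e ∈ E, v ∈ e} w^r(e); and (b) every edge (u,v) ∈ E^r has an endpoint x ∈ {u,v} with W_x + W^r_x ≥ 1 − 1/β. -/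
/-!
Give each node `v` the capacity `c v = ⌊β (1 - W v)⌋₊` and build greedily, edge by edge of `E^r`,
an integer weighting `t` of `E^r` whose weighted degrees respect the capacities and such that every
edge of `E^r` has a saturated endpoint (a maximal `c`-matching). Then `w^r = t / β` works: the
capacity bound gives (a), and at a saturated endpoint `x` the floor loses less than one unit,
so `β (W_x + W^r_x) > β - 1`, which is (b).
-/

open Finset

variable {V : Type*}

namespace SimpleGraph

variable [Fintype V] [DecidableEq V] (G : SimpleGraph V) [DecidableRel G.Adj]
  {M : Type*} [AddCommMonoid M]

def weightedDegree (t : Sym2 V → M) (v : V) : M :=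
  ∑ e ∈ G.edgeFinset, if v ∈ e then t e else 0

theorem weightedDegree_add (t s : Sym2 V → M) (v : V) :
    G.weightedDegree (t + s) v = G.weightedDegree t v + G.weightedDegree s v := by
  simp only [weightedDegree, Pi.add_apply, ← sum_add_distrib, ite_add_zero]

theorem weightedDegree_single {e : Sym2 V} (he : e ∈ G.edgeFinset) (k : M) (v : V) :
    G.weightedDegree (Pi.single e k) v = if v ∈ e then k else 0 := by
  rw [weightedDegree, sum_eq_single_of_mem e he]
  · simp
  · intro e' _ hne
    simp [hne]

theorem nodeWeight_natCast_div (t : Sym2 V → ℕ) (β : ℝ) (v : V) :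
    nodeWeight G (fun e => (t e : ℝ) / β) v = ((G.weightedDegree t v : ℕ) : ℝ) / β := by
  simp only [nodeWeight, weightedDegree, Nat.cast_sum, sum_div, Nat.cast_ite, Nat.cast_zero,
    ite_div, zero_div]

theorem exists_maximal_bMatching (c : V → ℕ) (Er : Finset (Sym2 V)) (hEr : Er ⊆ G.edgeFinset) :
    ∃ t : Sym2 V → ℕ, (∀ e ∉ Er, t e = 0) ∧ (∀ v, G.weightedDegree t v ≤ c v) ∧
      ∀ e ∈ Er, ∃ x ∈ e, c x ≤ G.weightedDegree t x := by
  induction Er using Finset.induction_on with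
  | empty => exact ⟨0, fun _ _ => rfl, fun v => by simp [weightedDegree], by simp⟩
  | insert e s _ ih =>
    obtain ⟨t, ht_supp, ht_le, ht_sat⟩ := ih ((subset_insert e s).trans hEr)
    have he : e ∈ G.edgeFinset := hEr (mem_insert_self e s)
    induction e using Sym2.ind with
    | _ a b =>
    -- the largest amount that can be put on `s(a, b)`; it saturates `a` or `b`
    set k := min (c a - G.weightedDegree t a) (c b - G.weightedDegree t b)
    have hdeg (x : V) : G.weightedDegree (t + Pi.single s(a, b) k) x =
        G.weightedDegree t x + if x ∈ s(a, b) then k else 0 := by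
      rw [weightedDegree_add, weightedDegree_single G he]
    refine ⟨t + Pi.single s(a, b) k, fun e' he' => ?_, fun x => ?_, fun e' he' => ?_⟩
    · obtain ⟨hne, hs⟩ := not_or.1 (mt mem_insert.2 he')
      simp [ht_supp e' hs, hne]
    · rw [hdeg]
      split_ifs with hx
      · have := ht_le x
        rcases Sym2.mem_iff.1 hx with rfl | rfl <;> omega
      · simpa using ht_le x
    · rcases mem_insert.1 he' with rfl | hs
      · have := ht_le a
        have := ht_le b
        by_cases hka : k = c a - G.weightedDegree t a
        · exact ⟨a, Sym2.mem_mk_left a b, by rw [hdeg, if_pos (Sym2.mem_mk_left a b)]; omega⟩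
        · exact ⟨b, Sym2.mem_mk_right a b, by rw [hdeg, if_pos (Sym2.mem_mk_right a b)]; omega⟩
      · obtain ⟨x, hx, hsat⟩ := ht_sat e' hs
        exact ⟨x, hx, hsat.trans (by rw [hdeg]; exact Nat.le_add_right _ _)⟩

end SimpleGraph

section FloorCapacity

variable {β W : ℝ} {d : ℕ}

theorem add_div_le_one_of_le_floor (hβ : 0 < β) (hW : W < 1) (h : d ≤ ⌊β * (1 - W)⌋₊) :
    W + d / β ≤ 1 := by
  have hd : (d : ℝ) ≤ β * (1 - W) :=
    (Nat.cast_le.2 h).trans (Nat.floor_le (by nlinarith))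
  rw [← le_sub_iff_add_le', div_le_iff₀ hβ]
  linarith

theorem one_sub_inv_le_of_floor_le (hβ : 0 < β) (h : ⌊β * (1 - W)⌋₊ ≤ d) :
    1 - 1 / β ≤ W + d / β := by
  have hd : β * (1 - W) - 1 < d := (Nat.sub_one_lt_floor _).trans_le (Nat.cast_le.2 h)
  have : (β * (1 - W) - 1) / β ≤ d / β := div_le_div_of_nonneg_right hd.le hβ.le
  rw [sub_div, mul_div_cancel_left₀ _ hβ.ne'] at this
  linarith

end FloorCapacity

theorem stmt8 [Fintype V] [DecidableEq V] (G : SimpleGraph V) [DecidableRel G.Adj]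
    (Er : Finset (Sym2 V)) (hEr : Er ⊆ G.edgeFinset)
    (β : ℕ) (hβ : 0 < β)
    (W : V → ℝ) (hW : ∀ v : V, 0 ≤ W v ∧ W v < 1) :
    ∃ wr : Sym2 V → ℝ,
      (∀ e : Sym2 V, 0 ≤ wr e) ∧
      (∀ e : Sym2 V, e ∉ Er → wr e = 0) ∧
      (∀ e : Sym2 V, ∃ t : ℕ, wr e = (t : ℝ) / (β : ℝ)) ∧
      (∀ v : V, W v + nodeWeight G wr v ≤ 1) ∧
      (∀ u v : V, s(u, v) ∈ Er →
        1 - 1 / (β : ℝ) ≤ W u + nodeWeight G wr u ∨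
        1 - 1 / (β : ℝ) ≤ W v + nodeWeight G wr v) := by
  obtain ⟨t, ht_supp, ht_le, ht_sat⟩ :=
    G.exists_maximal_bMatching (fun v => ⌊(β : ℝ) * (1 - W v)⌋₊) Er hEr
  have hβ' : (0 : ℝ) < β := Nat.cast_pos.2 hβ
  refine ⟨fun e => (t e : ℝ) / β, fun e => by positivity, fun e he => by simp [ht_supp e he],
    fun e => ⟨t e, rfl⟩, fun v => ?_, fun u v huv => ?_⟩
  · rw [G.nodeWeight_natCast_div]
    exact add_div_le_one_of_le_floor hβ' (hW v).2 (ht_le v)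
  · simp only [G.nodeWeight_natCast_div]
    obtain ⟨x, hx, hsat⟩ := ht_sat _ huv
    rcases Sym2.mem_iff.1 hx with rfl | rfl
    · exact Or.inl (one_sub_inv_le_of_floor_le hβ' hsat)
    · exact Or.inr (one_sub_inv_le_of_floor_le hβ' hsat)
end
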